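/- Let A be a Hopf algebra over a field k with bijective antipode S, let M be an A-bimodule and σ a k-algebra automorphism of A. Then for m ∈ M the following are equivalent: (i) Σ S⁻¹(a₂) m σ(a₁) = ε(a) m for all a ∈ A; (ii) am = mσ(a) for all a ∈ A. In other words, the space of right A-module homomorphisms from the trivial right module k to the right adjoint module (^{S⁻²}M^σ)' is identified with the σ-twisted centralizer Z^σ_A(M) = {m ∈ M : am = mσ(a) for all a}. -/

import Mathlib

/-!
Write `ρ(a) = Σ S⁻¹(a₂) ⊗ σ(a₁)ᵒᵖ` for the element of `A ⊗ Aᵐᵒᵖ` acting in (i). Since `S⁻¹` is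
an antimultiplicative inverse of `S`, applying it to the antipode axioms gives
`Σ S⁻¹(a₂) a₁ = ε(a) = Σ a₂ S⁻¹(a₁)`. If `m` satisfies (ii), then `ρ(a) m = Σ S⁻¹(a₂) a₁ m = ε(a) m`.
Conversely, coassociativity and the second identity give `Σ (a₂ ⊗ 1) ρ(a₁) = 1 ⊗ σ(a)ᵒᵖ`, so (i)
yields `m σ(a) = Σ a₂ ρ(a₁) m = Σ ε(a₁) a₂ m = a m`.
-/

open TensorProduct MulOpposite

noncomputable section

variable (k A : Type) [Field k] [Ring A] [HopfAlgebra k A]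

/-- The linear map `a ↦ Σ S⁻¹(a₂) ⊗ (σ a₁)ᵒᵖ : A → A ⊗ Aᵐᵒᵖ`; acting by it on
`m ∈ M` gives `Σ S⁻¹(a₂) m σ(a₁)`, the right action of `a` on `(^{S⁻²}M^σ)'`. -/
def radMap (σ : A ≃ₐ[k] A) (Si : A →ₗ[k] A) : A →ₗ[k] A ⊗[k] Aᵐᵒᵖ :=
  (TensorProduct.map Si ((opLinearEquiv k).toLinearMap ∘ₗ σ.toLinearMap)) ∘ₗ
    (TensorProduct.comm k A A).toLinearMap ∘ₗ Coalgebra.comul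

open Coalgebra HopfAlgebra

lemma Coalgebra.sum_counit_right_smul {R C ι : Type*} [CommSemiring R] [AddCommMonoid C]
    [Module R C] [Coalgebra R C] {c : C} (r : Repr R c ι) :
    ∑ i ∈ r.index, counit (R := R) (r.right i) • r.left i = c := by
  simpa only [map_sum, TensorProduct.lift.tmul, LinearMap.flip_apply, LinearMap.lsmul_apply,
    one_smul] using congr(TensorProduct.lift (LinearMap.lsmul R C).flip $(sum_tmul_counit_eq r))

section InverseAntipode

variable {R H : Type*} [CommSemiring R] [Semiring H] [HopfAlgebra R H] {Si : H →ₗ[R] H}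
  (hSi₁ : ∀ a : H, Si (antipode R a) = a) (hSi₂ : ∀ a : H, antipode R (Si a) = a)
include hSi₁

lemma inverse_antipode_one : Si 1 = 1 := by
  simpa only [antipode_one] using hSi₁ 1

include hSi₂

lemma inverse_antipode_mul (a b : H) : Si (a * b) = Si b * Si a := by
  conv_lhs => rw [← hSi₂ a, ← hSi₂ b, ← antipode_mul_antidistrib, hSi₁]

lemma sum_inverse_antipode_mul_eq_smul {a : H} {ι : Type*} (r : Repr R a ι) :
    ∑ i ∈ r.index, Si (r.right i) * r.left i = counit (R := R) a • 1 := by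
  have := congr(Si $(sum_antipode_mul_eq_smul r))
  simpa only [map_sum, inverse_antipode_mul hSi₁ hSi₂, hSi₁, map_smul,
    inverse_antipode_one hSi₁] using this

lemma sum_mul_inverse_antipode_eq_smul {a : H} {ι : Type*} (r : Repr R a ι) :
    ∑ i ∈ r.index, r.right i * Si (r.left i) = counit (R := R) a • 1 := by
  have := congr(Si $(sum_mul_antipode_eq_smul r))
  simpa only [map_sum, inverse_antipode_mul hSi₁ hSi₂, hSi₁, map_smul,
    inverse_antipode_one hSi₁] using this

end InverseAntipode

section RadjointAction

variable {k A} (σ : A ≃ₐ[k] A) {Si : A →ₗ[k] A}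

lemma radMap_apply_repr {a : A} {ι : Type*} (r : Repr k a ι) :
    radMap k A σ Si a = ∑ i ∈ r.index, Si (r.right i) ⊗ₜ[k] op (σ (r.left i)) := by
  simp [radMap, ← r.eq]

variable (hSi₁ : ∀ a : A, Si (antipode k a) = a) (hSi₂ : ∀ a : A, antipode k (Si a) = a)
include hSi₁ hSi₂

lemma sum_tmul_one_mul_radMap {a : A} {ι : Type*} (r : Repr k a ι) :
    ∑ i ∈ r.index, (r.right i ⊗ₜ[k] (1 : Aᵐᵒᵖ)) * radMap k A σ Si (r.left i) =
      1 ⊗ₜ[k] op (σ a) := by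
  let ψ : A ⊗[k] (A ⊗[k] A) →ₗ[k] A ⊗[k] Aᵐᵒᵖ :=
    TensorProduct.map (LinearMap.mul' k A ∘ₗ TensorProduct.map LinearMap.id Si ∘ₗ
        (TensorProduct.comm k A A).toLinearMap)
      ((opLinearEquiv k).toLinearMap ∘ₗ σ.toLinearMap) ∘ₗ
    (TensorProduct.comm k A (A ⊗[k] A)).toLinearMap
  have hψ (x y z : A) : ψ (x ⊗ₜ (y ⊗ₜ z)) = (z * Si y) ⊗ₜ op (σ x) := rfl
  have coassoc := congr(ψ $(sum_tmul_tmul_eq r (fun i ↦ ℛ k (r.left i))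
    (fun i ↦ ℛ k (r.right i))))
  simp only [map_sum, hψ] at coassoc
  calc ∑ i ∈ r.index, (r.right i ⊗ₜ[k] (1 : Aᵐᵒᵖ)) * radMap k A σ Si (r.left i)
      = ∑ i ∈ r.index, ∑ j ∈ (ℛ k (r.left i)).index,
          (r.right i * Si ((ℛ k (r.left i)).right j)) ⊗ₜ[k]
            op (σ ((ℛ k (r.left i)).left j)) := by
        simp only [radMap_apply_repr σ (ℛ k (r.left _)), Finset.mul_sum,
          Algebra.TensorProduct.tmul_mul_tmul, one_mul]
    _ = ∑ i ∈ r.index, (counit (R := k) (r.right i) • (1 : A)) ⊗ₜ[k] op (σ (r.left i)) := by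
        rw [coassoc]
        simp only [← TensorProduct.sum_tmul, sum_mul_inverse_antipode_eq_smul hSi₁ hSi₂]
    _ = 1 ⊗ₜ[k] op (σ a) := by
        simp only [TensorProduct.smul_tmul, ← MulOpposite.op_smul, ← map_smul,
          ← TensorProduct.tmul_sum, ← Finset.op_sum, ← map_sum, sum_counit_right_smul]

variable {M : Type*} [AddCommMonoid M] [Module k M] [Module (A ⊗[k] Aᵐᵒᵖ) M]
  [IsScalarTower k (A ⊗[k] Aᵐᵒᵖ) M] {m : M}

lemma twisted_central_of_radMap_smul_eq_counit_smul
    (hm : ∀ a : A, radMap k A σ Si a • m = counit (R := k) a • m) (a : A) :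
    (a ⊗ₜ[k] (1 : Aᵐᵒᵖ)) • m = ((1 : A) ⊗ₜ[k] op (σ a)) • m := by
  let r := ℛ k a
  calc (a ⊗ₜ[k] (1 : Aᵐᵒᵖ)) • m
      = ∑ i ∈ r.index, ((counit (R := k) (r.left i) • r.right i) ⊗ₜ[k] (1 : Aᵐᵒᵖ)) • m := by
        rw [← Finset.sum_smul, ← TensorProduct.sum_tmul, sum_counit_smul]
    _ = ∑ i ∈ r.index, (r.right i ⊗ₜ[k] (1 : Aᵐᵒᵖ)) • radMap k A σ Si (r.left i) • m := by
        refine Finset.sum_congr rfl fun i _ ↦ ?_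
        rw [hm, ← TensorProduct.smul_tmul', smul_assoc, smul_comm]
    _ = ((1 : A) ⊗ₜ[k] op (σ a)) • m := by
        rw [← sum_tmul_one_mul_radMap σ hSi₁ hSi₂ r, Finset.sum_smul]
        simp only [mul_smul]

lemma radMap_smul_eq_counit_smul_of_twisted_central
    (hm : ∀ a : A, (a ⊗ₜ[k] (1 : Aᵐᵒᵖ)) • m = ((1 : A) ⊗ₜ[k] op (σ a)) • m) (a : A) :
    radMap k A σ Si a • m = counit (R := k) a • m := by
  have tmul_smul (x y : A) : (x ⊗ₜ[k] op (σ y)) • m = ((x * y) ⊗ₜ[k] (1 : Aᵐᵒᵖ)) • m := by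
    have split : x ⊗ₜ[k] op (σ y) = (x ⊗ₜ[k] (1 : Aᵐᵒᵖ)) * ((1 : A) ⊗ₜ[k] op (σ y)) := by
      rw [Algebra.TensorProduct.tmul_mul_tmul, mul_one, one_mul]
    rw [split, mul_smul, ← hm, ← mul_smul, Algebra.TensorProduct.tmul_mul_tmul, mul_one]
  let r := ℛ k a
  calc radMap k A σ Si a • m
      = ((∑ i ∈ r.index, Si (r.right i) * r.left i) ⊗ₜ[k] (1 : Aᵐᵒᵖ)) • m := by
        simp only [radMap_apply_repr σ r, TensorProduct.sum_tmul, Finset.sum_smul, tmul_smul]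
    _ = counit (R := k) a • m := by
        rw [sum_inverse_antipode_mul_eq_smul hSi₁ hSi₂, ← TensorProduct.smul_tmul',
          ← Algebra.TensorProduct.one_def, smul_one_smul]

end RadjointAction

theorem radjoint_invariants_eq_twisted_center (M : Type) [AddCommGroup M] [Module k M]
    [Module (A ⊗[k] Aᵐᵒᵖ) M] [IsScalarTower k (A ⊗[k] Aᵐᵒᵖ) M]
    (σ : A ≃ₐ[k] A) (Si : A →ₗ[k] A)
    (hSi₁ : ∀ a : A, Si (HopfAlgebra.antipode (R := k) a) = a)
    (hSi₂ : ∀ a : A, HopfAlgebra.antipode (R := k) (Si a) = a) :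
    ∀ m : M,
      (∀ a : A, radMap k A σ Si a • m = Coalgebra.counit (R := k) a • m) ↔
      (∀ a : A, (a ⊗ₜ[k] (1 : Aᵐᵒᵖ)) • m = ((1 : A) ⊗ₜ[k] op (σ a)) • m) := fun _ ↦
  ⟨twisted_central_of_radMap_smul_eq_counit_smul σ hSi₁ hSi₂,
    radMap_smul_eq_counit_smul_of_twisted_central σ hSi₁ hSi₂⟩

end
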